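/- arXiv:1807.08328 — 2 statements merged into one kernel-verified Lean document; each statement's English description precedes it below -/
import Mathlib

section
/- Let $p\in C^1([0,\pi])$ with $p>0$, and let $u_1,u_2$ be eigenfunctions of $-(pu')'+Vu=\lambda u$ with separated boundary conditions, corresponding to the first two eigenvalues $\lambda_1<\lambda_2$, with $u_1>0$ on $(0,\pi)$ and $u_2$ having exactly one zero $x_0\in(0,\pi)$. Then the equation $u_2(x)^2 - u_1(x)^2 = 0$ has at most two solutions in $(0,\pi)$: at most one in $(0,x_0)$ and at most one in $[x_0,\pi)$. -/
/-!
The weighted Wronskian `W = p (u₁ u₂' - u₂ u₁')` satisfies `W' = (λ₁ - λ₂) u₁ u₂`, and the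
separated boundary conditions force `W(0) = W(π) = 0`. Since `u₁ u₂ > 0` on `(0, x₀)` and
`u₁ u₂ < 0` on `(x₀, π)`, `W` decreases from `0` and then increases back to `0`, so `W < 0`
on `(0, π)`. Hence `v = u₂ / u₁`, with `v' = W / (p u₁²)`, is strictly decreasing on `(0, π)`.
A solution of `u₂² = u₁²` is a point where `v = 1` on `(0, x₀)` and `v = -1` on `(x₀, π)`, so
there is at most one of each, and `x₀` itself is no solution since `u₁(x₀) > 0 = u₂(x₀)`.
-/

open Real Set

def wronskian (p u₁ u₂ u₁' u₂' : ℝ → ℝ) (x : ℝ) : ℝ :=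
  p x * (u₁ x * u₂' x - u₂ x * u₁' x)

theorem hasDerivAt_wronskian {p V u₁ u₂ u₁' u₂' : ℝ → ℝ} {lam₁ lam₂ x : ℝ}
    (hu₁ : HasDerivAt u₁ (u₁' x) x) (hu₂ : HasDerivAt u₂ (u₂' x) x)
    (hode₁ : HasDerivAt (fun y => p y * u₁' y) (V x * u₁ x - lam₁ * u₁ x) x)
    (hode₂ : HasDerivAt (fun y => p y * u₂' y) (V x * u₂ x - lam₂ * u₂ x) x) :
    HasDerivAt (wronskian p u₁ u₂ u₁' u₂') ((lam₁ - lam₂) * (u₁ x * u₂ x)) x := by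
  have hW_eq : wronskian p u₁ u₂ u₁' u₂' = fun y => p y * u₂' y * u₁ y - p y * u₁' y * u₂ y := by
    funext y
    simp only [wronskian]
    ring
  rw [hW_eq]
  exact ((hode₂.mul hu₁).sub (hode₁.mul hu₂)).congr_deriv (by ring)

/-- Both pairs `(u, p u')` at `a` are orthogonal to the unit vector `(cos α, -sin α)`, so they
are parallel. -/
theorem wronskian_eq_zero_of_boundary {p u₁ u₂ u₁' u₂' : ℝ → ℝ} {a α : ℝ}
    (h₁ : u₁ a * cos α - p a * u₁' a * sin α = 0)
    (h₂ : u₂ a * cos α - p a * u₂' a * sin α = 0) :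
    wronskian p u₁ u₂ u₁' u₂' a = 0 := by
  unfold wronskian
  linear_combination (cos α * (p a * u₂' a) + sin α * u₂ a) * h₁
    - (cos α * (p a * u₁' a) + sin α * u₁ a) * h₂
    - p a * (u₁ a * u₂' a - u₂ a * u₁' a) * sin_sq_add_cos_sq α

theorem neg_of_hasDerivAt_neg_of_left_eq_zero {f f' : ℝ → ℝ} {a b : ℝ}
    (hf : ∀ x ∈ Icc a b, HasDerivAt f (f' x) x) (hf' : ∀ x ∈ Ioo a b, f' x < 0)
    (ha : f a = 0) : ∀ x ∈ Ioc a b, f x < 0 := by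
  have hanti : StrictAntiOn f (Icc a b) :=
    strictAntiOn_of_hasDerivWithinAt_neg (convex_Icc a b)
      (fun x hx => (hf x hx).continuousAt.continuousWithinAt)
      (fun x hx => (hf x (interior_subset hx)).hasDerivWithinAt)
      (by simpa only [interior_Icc] using hf')
  intro x hx
  rw [← ha]
  exact hanti (left_mem_Icc.2 (hx.1.le.trans hx.2)) (Ioc_subset_Icc_self hx) hx.1

theorem neg_of_hasDerivAt_pos_of_right_eq_zero {f f' : ℝ → ℝ} {a b : ℝ}
    (hf : ∀ x ∈ Icc a b, HasDerivAt f (f' x) x) (hf' : ∀ x ∈ Ioo a b, 0 < f' x)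
    (hb : f b = 0) : ∀ x ∈ Ico a b, f x < 0 := by
  have hmono : StrictMonoOn f (Icc a b) :=
    strictMonoOn_of_hasDerivWithinAt_pos (convex_Icc a b)
      (fun x hx => (hf x hx).continuousAt.continuousWithinAt)
      (fun x hx => (hf x (interior_subset hx)).hasDerivWithinAt)
      (by simpa only [interior_Icc] using hf')
  intro x hx
  rw [← hb]
  exact hmono (Ico_subset_Icc_self hx) (right_mem_Icc.2 (hx.1.trans hx.2.le)) hx.2

theorem neg_of_hasDerivAt_neg_pos_of_endpoints_eq_zero {f f' : ℝ → ℝ} {a b c : ℝ}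
    (hc : c ∈ Ioo a b) (hf : ∀ x ∈ Icc a b, HasDerivAt f (f' x) x)
    (hneg : ∀ x ∈ Ioo a c, f' x < 0) (hpos : ∀ x ∈ Ioo c b, 0 < f' x)
    (ha : f a = 0) (hb : f b = 0) : ∀ x ∈ Ioo a b, f x < 0 := by
  intro x hx
  rcases le_or_gt x c with hxc | hcx
  · exact neg_of_hasDerivAt_neg_of_left_eq_zero
      (fun y hy => hf y (Icc_subset_Icc_right hc.2.le hy)) hneg ha x ⟨hx.1, hxc⟩
  · exact neg_of_hasDerivAt_pos_of_right_eq_zero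
      (fun y hy => hf y (Icc_subset_Icc_left hc.1.le hy)) hpos hb x ⟨hcx.le, hx.2⟩

theorem strictAntiOn_div_of_wronskian_neg {u₁ u₂ u₁' u₂' : ℝ → ℝ} {S : Set ℝ}
    (hS : Convex ℝ S) (hu₁ : ∀ x ∈ S, HasDerivAt u₁ (u₁' x) x)
    (hu₂ : ∀ x ∈ S, HasDerivAt u₂ (u₂' x) x) (hpos : ∀ x ∈ S, 0 < u₁ x)
    (hW : ∀ x ∈ S, u₁ x * u₂' x - u₂ x * u₁' x < 0) :
    StrictAntiOn (fun x => u₂ x / u₁ x) S := by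
  have hv : ∀ x ∈ S, HasDerivAt (fun y => u₂ y / u₁ y)
      ((u₂' x * u₁ x - u₂ x * u₁' x) / u₁ x ^ 2) x :=
    fun x hx => (hu₂ x hx).div (hu₁ x hx) (hpos x hx).ne'
  refine strictAntiOn_of_hasDerivWithinAt_neg hS
    (fun x hx => (hv x hx).continuousAt.continuousWithinAt)
    (fun x hx => (hv x (interior_subset hx)).hasDerivWithinAt) fun x hx => ?_
  have hx := interior_subset hx
  have hnum : u₂' x * u₁ x - u₂ x * u₁' x < 0 := by linarith [hW x hx]
  exact div_neg_of_neg_of_pos hnum (pow_pos (hpos x hx) 2)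

theorem subsingleton_sep_of_injOn {f : ℝ → ℝ} {S : Set ℝ} {P : ℝ → Prop} {c : ℝ}
    (hf : InjOn f S) (hc : ∀ x ∈ S, P x → f x = c) : {x ∈ S | P x}.Subsingleton :=
  fun _ ha _ hb => hf ha.1 hb.1 ((hc _ ha.1 ha.2).trans (hc _ hb.1 hb.2).symm)

theorem div_eq_one_of_sq_sub_sq_eq_zero {a b : ℝ} (ha : 0 < a) (hb : 0 < b)
    (h : b ^ 2 - a ^ 2 = 0) : b / a = 1 := by
  rw [div_eq_one_iff_eq ha.ne']
  nlinarith

theorem div_eq_neg_one_of_sq_sub_sq_eq_zero {a b : ℝ} (ha : 0 < a) (hb : b < 0)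
    (h : b ^ 2 - a ^ 2 = 0) : b / a = -1 := by
  rw [div_eq_iff ha.ne']
  nlinarith

theorem at_most_two_crossings_general (p V u₁ u₂ u₁' u₂' : ℝ → ℝ) (lam₁ lam₂ x₀ : ℝ)
    (hx₀ : x₀ ∈ Set.Ioo (0 : ℝ) π)
    (hppos : ∀ x ∈ Set.Icc (0 : ℝ) π, 0 < p x)
    (hu₁ : ∀ x ∈ Set.Icc (0 : ℝ) π, HasDerivAt u₁ (u₁' x) x)
    (hu₂ : ∀ x ∈ Set.Icc (0 : ℝ) π, HasDerivAt u₂ (u₂' x) x)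
    -- the Sturm–Liouville equations `-(p uⱼ')' + V uⱼ = lamⱼ uⱼ`:
    (hode₁ : ∀ x ∈ Set.Icc (0 : ℝ) π,
      HasDerivAt (fun y => p y * u₁' y) (V x * u₁ x - lam₁ * u₁ x) x)
    (hode₂ : ∀ x ∈ Set.Icc (0 : ℝ) π,
      HasDerivAt (fun y => p y * u₂' y) (V x * u₂ x - lam₂ * u₂ x) x)
    (hlam : lam₁ < lam₂)
    -- separated (self-adjoint) boundary conditions, common to both eigenfunctions:
    (hbc : ∃ α β : ℝ, α ∈ Set.Ico (0 : ℝ) π ∧ β ∈ Set.Ico (0 : ℝ) π ∧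
      (∀ u u' : ℝ → ℝ, (u = u₁ ∧ u' = u₁') ∨ (u = u₂ ∧ u' = u₂') →
        u 0 * Real.cos α - p 0 * u' 0 * Real.sin α = 0 ∧
        u π * Real.cos β - p π * u' π * Real.sin β = 0))
    (hu₁pos : ∀ x ∈ Set.Ioo (0 : ℝ) π, 0 < u₁ x)
    (hu₂pos : ∀ x ∈ Set.Ioo (0 : ℝ) x₀, 0 < u₂ x)
    (hu₂zero : u₂ x₀ = 0)
    (hu₂neg : ∀ x ∈ Set.Ioo x₀ π, u₂ x < 0) :
    Set.Subsingleton {x ∈ Set.Ioo (0 : ℝ) x₀ | u₂ x ^ 2 - u₁ x ^ 2 = 0} ∧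
    Set.Subsingleton {x ∈ Set.Ico x₀ π | u₂ x ^ 2 - u₁ x ^ 2 = 0} := by
  obtain ⟨α, β, -, -, hbcs⟩ := hbc
  obtain ⟨h₁0, h₁π⟩ := hbcs u₁ u₁' (Or.inl ⟨rfl, rfl⟩)
  obtain ⟨h₂0, h₂π⟩ := hbcs u₂ u₂' (Or.inr ⟨rfl, rfl⟩)
  have hL : Ioo 0 x₀ ⊆ Ioo 0 π := Ioo_subset_Ioo_right hx₀.2.le
  have hR : Ioo x₀ π ⊆ Ioo 0 π := Ioo_subset_Ioo_left hx₀.1.le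
  have hW : ∀ x ∈ Ioo 0 π, wronskian p u₁ u₂ u₁' u₂' x < 0 :=
    neg_of_hasDerivAt_neg_pos_of_endpoints_eq_zero hx₀
      (fun x hx => hasDerivAt_wronskian (hu₁ x hx) (hu₂ x hx) (hode₁ x hx) (hode₂ x hx))
      (fun x hx => mul_neg_of_neg_of_pos (by linarith)
        (mul_pos (hu₁pos x (hL hx)) (hu₂pos x hx)))
      (fun x hx => mul_pos_of_neg_of_neg (by linarith)
        (mul_neg_of_pos_of_neg (hu₁pos x (hR hx)) (hu₂neg x hx)))
      (wronskian_eq_zero_of_boundary h₁0 h₂0) (wronskian_eq_zero_of_boundary h₁π h₂π)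
  have hv : StrictAntiOn (fun x => u₂ x / u₁ x) (Ioo 0 π) :=
    strictAntiOn_div_of_wronskian_neg (convex_Ioo 0 π)
      (fun x hx => hu₁ x (Ioo_subset_Icc_self hx)) (fun x hx => hu₂ x (Ioo_subset_Icc_self hx))
      hu₁pos fun x hx => neg_of_mul_neg_right (hW x hx) (hppos x (Ioo_subset_Icc_self hx)).le
  have hcross_gt : ∀ x ∈ Ico x₀ π, u₂ x ^ 2 - u₁ x ^ 2 = 0 → x ∈ Ioo x₀ π := by
    rintro x ⟨hx₀x, hxπ⟩ hx
    refine ⟨lt_of_le_of_ne hx₀x ?_, hxπ⟩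
    rintro rfl
    nlinarith [hu₁pos x₀ hx₀]
  constructor
  · exact subsingleton_sep_of_injOn (hv.mono hL).injOn
      fun x hx => div_eq_one_of_sq_sub_sq_eq_zero (hu₁pos x (hL hx)) (hu₂pos x hx)
  · refine Subsingleton.anti (subsingleton_sep_of_injOn (hv.mono hR).injOn
      fun x hx => div_eq_neg_one_of_sq_sub_sq_eq_zero (hu₁pos x (hR hx)) (hu₂neg x hx))
      fun x hx => ⟨hcross_gt x hx.1 hx.2, hx.2⟩

theorem at_most_two_crossings (p p' V u₁ u₂ u₁' u₂' : ℝ → ℝ) (lam₁ lam₂ x₀ : ℝ)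
    (hx₀ : x₀ ∈ Set.Ioo (0 : ℝ) π)
    (hp : ∀ x ∈ Set.Icc (0 : ℝ) π, HasDerivAt p (p' x) x)
    (hp' : ContinuousOn p' (Set.Icc (0 : ℝ) π))
    (hppos : ∀ x ∈ Set.Icc (0 : ℝ) π, 0 < p x)
    (hu₁ : ∀ x ∈ Set.Icc (0 : ℝ) π, HasDerivAt u₁ (u₁' x) x)
    (hu₂ : ∀ x ∈ Set.Icc (0 : ℝ) π, HasDerivAt u₂ (u₂' x) x)
    -- the Sturm–Liouville equations `-(p uⱼ')' + V uⱼ = lamⱼ uⱼ`: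
    (hode₁ : ∀ x ∈ Set.Icc (0 : ℝ) π,
      HasDerivAt (fun y => p y * u₁' y) (V x * u₁ x - lam₁ * u₁ x) x)
    (hode₂ : ∀ x ∈ Set.Icc (0 : ℝ) π,
      HasDerivAt (fun y => p y * u₂' y) (V x * u₂ x - lam₂ * u₂ x) x)
    (hlam : lam₁ < lam₂)
    -- separated (self-adjoint) boundary conditions, common to both eigenfunctions:
    (hbc : ∃ α β : ℝ, α ∈ Set.Ico (0 : ℝ) π ∧ β ∈ Set.Ico (0 : ℝ) π ∧
      (∀ u u' : ℝ → ℝ, (u = u₁ ∧ u' = u₁') ∨ (u = u₂ ∧ u' = u₂') →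
        u 0 * Real.cos α - p 0 * u' 0 * Real.sin α = 0 ∧
        u π * Real.cos β - p π * u' π * Real.sin β = 0))
    (hu₁pos : ∀ x ∈ Set.Ioo (0 : ℝ) π, 0 < u₁ x)
    (hu₂pos : ∀ x ∈ Set.Ioo (0 : ℝ) x₀, 0 < u₂ x)
    (hu₂zero : u₂ x₀ = 0)
    (hu₂neg : ∀ x ∈ Set.Ioo x₀ π, u₂ x < 0) :
    Set.Subsingleton {x ∈ Set.Ioo (0 : ℝ) x₀ | u₂ x ^ 2 - u₁ x ^ 2 = 0} ∧
    Set.Subsingleton {x ∈ Set.Ico x₀ π | u₂ x ^ 2 - u₁ x ^ 2 = 0} :=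
  at_most_two_crossings_general p V u₁ u₂ u₁' u₂' lam₁ lam₂ x₀ hx₀ hppos hu₁ hu₂ hode₁ hode₂ hlam
    hbc hu₁pos hu₂pos hu₂zero hu₂neg
end

section
/- Suppose $r>0$ and $s\ge 0$ satisfy $\tan(\pi r) = r/y_1$ and $\tanh(\pi s)= s/y_1$ with both $r=r(y_1)$ and $s=s(y_1)$ differentiable in $y_1$, $\pi r \notin \frac{\pi}{2}+\pi\mathbb{Z}$. Then $\frac{d}{dy_1}(r^2+s^2) = \frac{2}{\pi}\left(\frac{s^2}{s^2-\eta} - \frac{r^2}{r^2+\eta}\right)$ where $\eta = y_1(y_1 - 1/\pi)$, provided $s^2 \neq \eta$. -/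
/-!
Differentiating `f (π u(y)) = u(y) / y` implicitly gives `π f' u' = (u' y - u) / y²`. For
`f = tan` and `f = tanh` the derivative `f' = 1 ± f²` is a polynomial in `f (π u) = u / y`, so
the relation becomes linear in `u'`: `π (r² + η) r' = -r` and `π (s² - η) s' = s`, with
`η = y (y - 1/π)`. Then `(r² + s²)' = 2 r r' + 2 s s'`.
-/

open Real Filter Topology

theorem Real.hasDerivAt_tan_one_add_sq {x : ℝ} (hx : cos x ≠ 0) :
    HasDerivAt tan (1 + tan x ^ 2) x := by
  simpa only [one_div, ← inv_one_add_tan_sq hx, inv_inv] using hasDerivAt_tan hx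

theorem Real.hasDerivAt_tanh (x : ℝ) : HasDerivAt tanh (1 - tanh x ^ 2) x := by
  have hcosh : cosh x ≠ 0 := (cosh_pos x).ne'
  have h := (hasDerivAt_sinh x).div (hasDerivAt_cosh x) hcosh
  rw [show sinh / cosh = tanh from funext fun y => (tanh_eq_sinh_div_cosh y).symm] at h
  refine h.congr_deriv ?_
  rw [tanh_eq_sinh_div_cosh]
  field_simp

theorem deriv_mul_eq_of_comp_mul_eq_div {f u : ℝ → ℝ} {f' c y : ℝ} (hy : y ≠ 0)
    (hf : HasDerivAt f f' (c * u y)) (hu : DifferentiableAt ℝ u y)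
    (heq : ∀ᶠ z in 𝓝 y, f (c * u z) = u z / z) :
    deriv u y * (c * f' * y ^ 2 - y) = -u y := by
  have hlhs := hf.comp y (hu.hasDerivAt.const_mul c)
  have hrhs := (hu.hasDerivAt.div (hasDerivAt_id y) hy).congr_of_eventuallyEq heq
  have h := hlhs.unique hrhs
  simp only [id, mul_one] at h
  field_simp at h
  linear_combination h

theorem deriv_mul_eq_of_tan_mul_eq_div {u : ℝ → ℝ} {c y : ℝ} (hc : c ≠ 0) (hy : y ≠ 0)
    (hu : DifferentiableAt ℝ u y) (hcos : cos (c * u y) ≠ 0)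
    (heq : ∀ᶠ z in 𝓝 y, tan (c * u z) = u z / z) :
    deriv u y * (c * (u y ^ 2 + y * (y - 1 / c))) = -u y := by
  have h := deriv_mul_eq_of_comp_mul_eq_div hy (hasDerivAt_tan_one_add_sq hcos) hu heq
  rw [heq.self_of_nhds] at h
  field_simp at h ⊢
  linear_combination h

theorem deriv_mul_eq_of_tanh_mul_eq_div {u : ℝ → ℝ} {c y : ℝ} (hc : c ≠ 0) (hy : y ≠ 0)
    (hu : DifferentiableAt ℝ u y) (heq : ∀ᶠ z in 𝓝 y, tanh (c * u z) = u z / z) :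
    deriv u y * (c * (u y ^ 2 - y * (y - 1 / c))) = u y := by
  have h := deriv_mul_eq_of_comp_mul_eq_div hy (hasDerivAt_tanh _) hu heq
  rw [heq.self_of_nhds] at h
  field_simp at h ⊢
  linear_combination -h

theorem gap_derivative_formula_general (r s : ℝ → ℝ) (y₁ : ℝ) (hy₁ : 0 < y₁)
    (hr : DifferentiableAt ℝ r y₁) (hs : DifferentiableAt ℝ s y₁)
    (hrpos : 0 < r y₁)
    (hreq : ∀ y ∈ Set.Ioi (0 : ℝ), Real.tan (π * r y) = r y / y)
    (hseq : ∀ y ∈ Set.Ioi (0 : ℝ), Real.tanh (π * s y) = s y / y)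
    (hreg : ∀ k : ℤ, π * r y₁ ≠ π / 2 + k * π)
    (hne : (s y₁) ^ 2 ≠ y₁ * (y₁ - 1 / π)) :
    deriv (fun y => r y ^ 2 + s y ^ 2) y₁ =
      (2 / π) * ((s y₁) ^ 2 / ((s y₁) ^ 2 - y₁ * (y₁ - 1 / π)) -
        (r y₁) ^ 2 / ((r y₁) ^ 2 + y₁ * (y₁ - 1 / π))) := by
  have hpos : ∀ᶠ y in 𝓝 y₁, y ∈ Set.Ioi (0 : ℝ) := Ioi_mem_nhds hy₁
  have hcos : cos (π * r y₁) ≠ 0 := cos_ne_zero_iff.mpr fun k h => hreg k (by rw [h]; ring)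
  have hr' := deriv_mul_eq_of_tan_mul_eq_div pi_ne_zero hy₁.ne' hr hcos (hpos.mono hreq)
  have hs' := deriv_mul_eq_of_tanh_mul_eq_div pi_ne_zero hy₁.ne' hs (hpos.mono hseq)
  have hrη : r y₁ ^ 2 + y₁ * (y₁ - 1 / π) ≠ 0 := by
    intro h
    rw [h, mul_zero, mul_zero] at hr'
    linarith
  have hsη : s y₁ ^ 2 - y₁ * (y₁ - 1 / π) ≠ 0 := sub_ne_zero.mpr hne
  rw [((hr.hasDerivAt.fun_pow 2).fun_add (hs.hasDerivAt.fun_pow 2)).deriv,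
    eq_div_of_mul_eq (mul_ne_zero pi_ne_zero hrη) hr',
    eq_div_of_mul_eq (mul_ne_zero pi_ne_zero hsη) hs']
  field_simp
  ring

theorem gap_derivative_formula (r s : ℝ → ℝ) (y₁ : ℝ) (hy₁ : 0 < y₁)
    (hr : DifferentiableAt ℝ r y₁) (hs : DifferentiableAt ℝ s y₁)
    (hrpos : 0 < r y₁) (hsnonneg : 0 ≤ s y₁)
    (hreq : ∀ y ∈ Set.Ioi (0 : ℝ), Real.tan (π * r y) = r y / y)
    (hseq : ∀ y ∈ Set.Ioi (0 : ℝ), Real.tanh (π * s y) = s y / y)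
    (hreg : ∀ k : ℤ, π * r y₁ ≠ π / 2 + k * π)
    (hne : (s y₁) ^ 2 ≠ y₁ * (y₁ - 1 / π)) :
    deriv (fun y => r y ^ 2 + s y ^ 2) y₁ =
      (2 / π) * ((s y₁) ^ 2 / ((s y₁) ^ 2 - y₁ * (y₁ - 1 / π)) -
        (r y₁) ^ 2 / ((r y₁) ^ 2 + y₁ * (y₁ - 1 / π))) :=
  gap_derivative_formula_general r s y₁ hy₁ hr hs hrpos hreq hseq hreg hne
end
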